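/- Let α₀ be the unique positive solution of √(1+4α²) + log(2α/(1+√(1+4α²))) = 0. If 0 < α < α₀, then Re χ_α(0) < 0 and there exists a unique ξ ∈ (0,1) such that χ_α(−ξ) = 0; if α = α₀, then χ_α(0) = 0; and if α > α₀, then Re χ_α(0) > 0. -/

import Mathlib

open Complex

/-- The principal branch of the complex square root. -/
noncomputable def csqrt (z : ℂ) : ℂ := z ^ (1 / 2 : ℂ)

/-- `χ_α(z) := (1/2)·√(4α²+(1+z)²) + ((1+z)/2)·log(2α/(1+z+√(4α²+(1+z)²)))`,
with principal branches of square root and logarithm. -/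
noncomputable def chi (α : ℝ) (z : ℂ) : ℂ :=
  (1 / 2 : ℂ) * csqrt (4 * (α : ℂ) ^ 2 + (1 + z) ^ 2) +
    (1 + z) / 2 * Complex.log (2 * (α : ℂ) / (1 + z + csqrt (4 * (α : ℂ) ^ 2 + (1 + z) ^ 2)))

/-!
For real `s` and `α > 0` everything in `χ_α(s - 1)` is real, and with
`h x = √(1 + x²) - x · arsinh x` (`chiProfile`) one has `χ_α(s - 1) = α · h (s / (2α))`, because
`2α / (s + √(4α² + s²)) = exp (-arsinh (s / (2α)))`. Since `h' = -arsinh`, `h` is strictly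
decreasing on `[0, ∞)`, and the defining equation of `α₀` says exactly `h (1 / (2α₀)) = 0`.
So the sign of `χ_α(0) = α · h (1 / (2α))` is that of `α - α₀`, and for `α < α₀` the zeros
`ξ ∈ (0, 1)` of `χ_α(-ξ)` are those with `(1 - ξ) / (2α) = 1 / (2α₀)`, i.e. `ξ = 1 - α / α₀`.
-/

open Real Set

noncomputable def chiProfile (x : ℝ) : ℝ := √(1 + x ^ 2) - x * arsinh x

theorem hasDerivAt_chiProfile (x : ℝ) : HasDerivAt chiProfile (-arsinh x) x := by
  have hpos : 0 < 1 + x ^ 2 := by positivity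
  have hsqrt : HasDerivAt (fun x : ℝ => √(1 + x ^ 2)) (2 * x / (2 * √(1 + x ^ 2))) x := by
    simpa using ((hasDerivAt_pow 2 x).const_add 1).sqrt hpos.ne'
  refine (hsqrt.sub ((hasDerivAt_id' x).mul (hasDerivAt_arsinh x))).congr_deriv ?_
  have : √(1 + x ^ 2) ≠ 0 := (sqrt_pos.2 hpos).ne'
  field_simp
  ring

theorem chiProfile_strictAntiOn : StrictAntiOn chiProfile (Ici 0) := by
  refine strictAntiOn_of_deriv_neg (convex_Ici 0)
    (fun x _ => (hasDerivAt_chiProfile x).continuousAt.continuousWithinAt) fun x hx => ?_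
  rw [interior_Ici] at hx
  rw [(hasDerivAt_chiProfile x).deriv, neg_lt_zero, arsinh_pos_iff]
  exact hx

theorem csqrt_ofReal {x : ℝ} (hx : 0 ≤ x) : csqrt x = (√x : ℝ) := by
  rw [csqrt, ← ofReal_one, ← ofReal_ofNat, ← ofReal_div, ← ofReal_cpow hx, sqrt_eq_rpow]

theorem sqrt_four_mul_sq_add_sq {α : ℝ} (hα : 0 < α) (s : ℝ) :
    √(4 * α ^ 2 + s ^ 2) = 2 * α * √(1 + (s / (2 * α)) ^ 2) := by
  rw [show 4 * α ^ 2 + s ^ 2 = (2 * α) ^ 2 * (1 + (s / (2 * α)) ^ 2) by field_simp; ring,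
    sqrt_mul (by positivity), sqrt_sq (by positivity)]

theorem div_add_sqrt_eq_exp_neg_arsinh {α : ℝ} (hα : 0 < α) (s : ℝ) :
    2 * α / (s + √(4 * α ^ 2 + s ^ 2)) = Real.exp (-arsinh (s / (2 * α))) := by
  rw [Real.exp_neg, exp_arsinh, sqrt_four_mul_sq_add_sq hα]
  field_simp

theorem sqrt_add_mul_log_eq_chiProfile {α : ℝ} (hα : 0 < α) (s : ℝ) :
    √(4 * α ^ 2 + s ^ 2) + s * Real.log (2 * α / (s + √(4 * α ^ 2 + s ^ 2))) =
      2 * α * chiProfile (s / (2 * α)) := by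
  rw [div_add_sqrt_eq_exp_neg_arsinh hα, Real.log_exp, sqrt_four_mul_sq_add_sq hα, chiProfile]
  field_simp
  ring

theorem chi_ofReal_sub_one {α : ℝ} (hα : 0 < α) (s : ℝ) :
    chi α (s - 1) = (α * chiProfile (s / (2 * α)) : ℝ) := by
  have harg : 4 * (α : ℂ) ^ 2 + (1 + (s - 1)) ^ 2 = (4 * α ^ 2 + s ^ 2 : ℝ) := by
    push_cast; ring
  have hquot : 2 * (α : ℂ) / (1 + (s - 1) + (√(4 * α ^ 2 + s ^ 2) : ℝ)) =
      (2 * α / (s + √(4 * α ^ 2 + s ^ 2)) : ℝ) := by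
    push_cast; ring_nf
  have hlog := div_add_sqrt_eq_exp_neg_arsinh hα s ▸ (Real.exp_pos _).le
  rw [chi, harg, csqrt_ofReal (by positivity), hquot, ← ofReal_log hlog,
    ← mul_div_cancel_left₀ (α * _) (two_ne_zero : (2 : ℝ) ≠ 0), ← mul_assoc,
    ← sqrt_add_mul_log_eq_chiProfile hα]
  push_cast
  ring

theorem chi_zero_eq {α : ℝ} (hα : 0 < α) : chi α 0 = (α * chiProfile (1 / (2 * α)) : ℝ) := by
  rw [← chi_ofReal_sub_one hα 1]
  norm_num

theorem strictMonoOn_chiProfile_one_div_two_mul :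
    StrictMonoOn (fun a : ℝ => chiProfile (1 / (2 * a))) (Ioi 0) := by
  rintro a (ha : 0 < a) b (hb : 0 < b) hab
  exact chiProfile_strictAntiOn (mem_Ici.2 (by positivity)) (mem_Ici.2 (by positivity))
    (one_div_lt_one_div_of_lt (by positivity) (by linarith))

theorem chi_neg_ofReal_eq_zero_iff {α α₀ ξ : ℝ} (hα : 0 < α) (hα₀ : 0 < α₀) (hξ : ξ ≤ 1)
    (hzero : chiProfile (1 / (2 * α₀)) = 0) : chi α (-ξ) = 0 ↔ ξ = 1 - α / α₀ := by
  rw [show -(ξ : ℂ) = (1 - ξ : ℝ) - 1 by push_cast; ring, chi_ofReal_sub_one hα,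
    ofReal_eq_zero, mul_eq_zero, or_iff_right hα.ne', ← hzero]
  refine ⟨fun h => ?_, fun h => ?_⟩
  · have hx := chiProfile_strictAntiOn.injOn (div_nonneg (sub_nonneg.2 hξ) (by positivity))
      (mem_Ici.2 (by positivity)) h
    field_simp at hx
    rw [← hx, mul_div_cancel_right₀ _ hα₀.ne']
    ring
  · rw [h, sub_sub_cancel]
    field_simp

theorem chi_at_zero_sign (α₀ : ℝ) (hα₀pos : 0 < α₀)
    (hα₀ : Real.sqrt (1 + 4 * α₀ ^ 2) +
      Real.log (2 * α₀ / (1 + Real.sqrt (1 + 4 * α₀ ^ 2))) = 0)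
    (α : ℝ) (hα : 0 < α) :
    (α < α₀ → (chi α 0).re < 0 ∧
      ∃! ξ : ℝ, ξ ∈ Set.Ioo (0 : ℝ) 1 ∧ chi α (-(ξ : ℂ)) = 0) ∧
    (α = α₀ → chi α 0 = 0) ∧
    (α₀ < α → 0 < (chi α 0).re) := by
  have hzero : chiProfile (1 / (2 * α₀)) = 0 := by
    have h := sqrt_add_mul_log_eq_chiProfile hα₀pos 1
    rw [one_pow, one_mul, add_comm (4 * α₀ ^ 2), hα₀, eq_comm, mul_eq_zero] at h
    exact h.resolve_left (by positivity)
  have hmono := strictMonoOn_chiProfile_one_div_two_mul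
  refine ⟨fun hlt => ⟨?_, ?_⟩, fun heq => ?_, fun hgt => ?_⟩
  · rw [chi_zero_eq hα, ofReal_re]
    exact mul_neg_of_pos_of_neg hα (hzero ▸ hmono hα hα₀pos hlt)
  · refine ⟨1 - α / α₀, ⟨⟨sub_pos.2 ((div_lt_one hα₀pos).2 hlt),
      sub_lt_self _ (div_pos hα hα₀pos)⟩, ?_⟩, fun ξ ⟨hξ, hξzero⟩ => ?_⟩
    · exact (chi_neg_ofReal_eq_zero_iff hα hα₀pos (by linarith [div_pos hα hα₀pos]) hzero).2 rfl
    · exact (chi_neg_ofReal_eq_zero_iff hα hα₀pos hξ.2.le hzero).1 hξzero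
  · rw [chi_zero_eq hα, heq, hzero, mul_zero, ofReal_zero]
  · rw [chi_zero_eq hα, ofReal_re]
    exact mul_pos hα (hzero ▸ hmono hα₀pos hα hgt)
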